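/- Let (X_1,Y_1),…,(X_n,Y_n) be i.i.d. pairs with continuous marginal CDFs F_X and F_Y. Define ω̂ = (1/n)Σ_j F̂_X(X_j)F̂_Y(Y_j) − 1/4 and ω = E[F_X(X)F_Y(Y)] − 1/4, where F̂_X, F̂_Y are the empirical CDFs. Then for any ε > 0, P(|ω̂ − ω| > 3ε) ≤ 6(n+1)exp(−2nε²). -/

import Mathlib

/-!
Write `ω̂ - ω = A + B + C` with `A = (1/n) Σ_j (F̂_X - F_X)(X_j) F̂_Y(Y_j)`,
`B = (1/n) Σ_j F_X(X_j) (F̂_Y - F_Y)(Y_j)` and `C = (1/n) Σ_j F_X(X_j) F_Y(Y_j) - E[F_X(X) F_Y(Y)]`.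
All CDFs take values in `[0, 1]`, so `|A| ≤ sup |F̂_X - F_X|` and `|B| ≤ sup |F̂_Y - F_Y|`, and
Hoeffding's inequality gives `P(|C| > ε) ≤ 2 exp(-2nε²)`.

For the suprema, continuity of `F` provides points `a_k`, `b_k` with `F(a_k) = k/n - ε` and
`F(b_k) = k/n + ε`, `k = 0, …, n`. Since `F̂` only takes the values `k/n`, a deviation
`|F̂(x) - F(x)| > ε` anywhere forces a deviation of at least `ε` at some `a_k` or `b_k`, and
Hoeffding's inequality for these `2(n+1)` indicator sums gives `2(n+1) exp(-2nε²)`.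
-/

open MeasureTheory ProbabilityTheory Real Set

lemma natCast_mul_mean {n : ℕ} (t : Fin n → ℝ) : n * ((1 / n) * ∑ i, t i) = ∑ i, t i := by
  rcases n.eq_zero_or_pos with rfl | hn
  · simp
  · field_simp

section Hoeffding

variable {Ω : Type*} [MeasurableSpace Ω] {μ : Measure Ω}

lemma measureReal_natCast_mul_le_sum_le {n : ℕ} {Y : Fin n → Ω → ℝ} (hind : iIndepFun Y μ)
    (hY : ∀ i, HasSubgaussianMGF (Y i) (1 / 4) μ) {ε : ℝ} (hε : 0 ≤ ε) :
    μ.real {ω | n * ε ≤ ∑ i, Y i ω} ≤ exp (-2 * n * ε ^ 2) := by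
  refine (HasSubgaussianMGF.measure_sum_ge_le_of_iIndepFun hind (fun i _ ↦ hY i)
    (by positivity)).trans_eq ?_
  rcases n.eq_zero_or_pos with rfl | hn
  · simp
  · congr 1
    simp only [Finset.sum_const, Finset.card_univ, Fintype.card_fin, nsmul_eq_mul]
    push_cast
    field_simp
    ring

variable [IsProbabilityMeasure μ]

lemma hasSubgaussianMGF_sub_integral_of_mem_Icc_zero_one {Z : Ω → ℝ} (hm : Measurable Z)
    (hZ : ∀ ω, Z ω ∈ Icc 0 1) : HasSubgaussianMGF (fun ω ↦ Z ω - μ[Z]) (1 / 4) μ := by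
  convert hasSubgaussianMGF_of_mem_Icc hm.aemeasurable (ae_of_all μ hZ) using 1
  ext
  norm_num

variable {n : ℕ} {Z : Fin n → Ω → ℝ} (hm : ∀ i, Measurable (Z i)) (hZ : ∀ i ω, Z i ω ∈ Icc 0 1)
  (hind : iIndepFun Z μ) {m : ℝ} (hmean : ∀ i, μ[Z i] = m) {ε : ℝ} (hε : 0 ≤ ε)
include hm hZ hind hmean hε

lemma measureReal_add_le_mean_le :
    μ.real {ω | m + ε ≤ (1 / n) * ∑ i, Z i ω} ≤ exp (-2 * n * ε ^ 2) := by
  refine (measureReal_mono fun ω (hω : m + ε ≤ _) ↦ ?_).trans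
    (measureReal_natCast_mul_le_sum_le (Y := fun i ω ↦ Z i ω - m)
      (hind.comp (fun (_ : Fin n) (x : ℝ) ↦ x - m) (fun _ ↦ by fun_prop))
      (fun i ↦ hmean i ▸ hasSubgaussianMGF_sub_integral_of_mem_Icc_zero_one (hm i) (hZ i)) hε)
  have := mul_le_mul_of_nonneg_left hω n.cast_nonneg
  simp only [mem_ofPred_eq, Finset.sum_sub_distrib, Finset.sum_const, Finset.card_univ,
    Fintype.card_fin, nsmul_eq_mul, natCast_mul_mean] at this ⊢
  linarith

lemma measureReal_mean_add_le_le :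
    μ.real {ω | (1 / n) * ∑ i, Z i ω + ε ≤ m} ≤ exp (-2 * n * ε ^ 2) := by
  refine (measureReal_mono fun ω (hω : _ + ε ≤ m) ↦ ?_).trans
    (measureReal_natCast_mul_le_sum_le (Y := fun i ω ↦ m - Z i ω)
      (hind.comp (fun (_ : Fin n) (x : ℝ) ↦ m - x) (fun _ ↦ by fun_prop))
      (fun i ↦ ?_) hε)
  · have := mul_le_mul_of_nonneg_left hω n.cast_nonneg
    simp only [mem_ofPred_eq, Finset.sum_sub_distrib, Finset.sum_const, Finset.card_univ,
      Fintype.card_fin, nsmul_eq_mul, mul_add, natCast_mul_mean] at this ⊢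
    linarith
  · convert (hasSubgaussianMGF_sub_integral_of_mem_Icc_zero_one (μ := μ) (hm i) (hZ i)).neg
      using 1
    ext ω
    simp [hmean i]

lemma measureReal_lt_abs_mean_sub_le :
    μ.real {ω | ε < |(1 / n) * ∑ i, Z i ω - m|} ≤ 2 * exp (-2 * n * ε ^ 2) := by
  have hsub : {ω | ε < |(1 / n) * ∑ i, Z i ω - m|} ⊆
      {ω | m + ε ≤ (1 / n) * ∑ i, Z i ω} ∪ {ω | (1 / n) * ∑ i, Z i ω + ε ≤ m} :=
    fun ω (hω : ε < |_|) ↦ by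
      rcases lt_abs.1 hω with h | h
      · exact Or.inl (by simp only [mem_ofPred_eq]; linarith)
      · exact Or.inr (by simp only [mem_ofPred_eq]; linarith)
  calc _ ≤ _ := measureReal_mono hsub
    _ ≤ _ := measureReal_union_le _ _
    _ ≤ _ := add_le_add (measureReal_add_le_mean_le hm hZ hind hmean hε)
      (measureReal_mean_add_le_le hm hZ hind hmean hε)
    _ = _ := (two_mul _).symm

end Hoeffding

noncomputable def empiricalCDF {n : ℕ} (w : Fin n → ℝ) (x : ℝ) : ℝ :=
  (1 / (n : ℝ)) * ∑ i, if w i ≤ x then (1 : ℝ) else 0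

namespace empiricalCDF

variable {n : ℕ} (w : Fin n → ℝ)

lemma exists_eq_div (x : ℝ) : ∃ k : Fin (n + 1), empiricalCDF w x = k / n := by
  classical
  refine ⟨⟨(Finset.univ.filter fun i ↦ w i ≤ x).card,
    Nat.lt_succ_of_le ((Finset.card_filter_le _ _).trans_eq (by simp))⟩, ?_⟩
  rw [empiricalCDF, Finset.sum_boole]
  ring

lemma monotone : Monotone (empiricalCDF w) := fun x y hxy ↦ by
  unfold empiricalCDF
  gcongr with i
  split_ifs <;> grind

lemma nonneg (x : ℝ) : 0 ≤ empiricalCDF w x := by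
  unfold empiricalCDF
  positivity

lemma le_one (x : ℝ) : empiricalCDF w x ≤ 1 := by
  obtain ⟨k, hk⟩ := exists_eq_div w x
  rw [hk]
  exact div_le_one_of_le₀ (by exact_mod_cast k.is_le) n.cast_nonneg

lemma abs_le_one (x : ℝ) : |empiricalCDF w x| ≤ 1 :=
  abs_le.2 ⟨by linarith [nonneg w x], le_one w x⟩

end empiricalCDF

section Grid

variable {F : ℝ → ℝ} {n : ℕ} {ε : ℝ}

lemma exists_forall_mem_Ioo_imp_eq (hF : Ioo 0 1 ⊆ range F) {ι : Type*} (c : ι → ℝ) :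
    ∃ a : ι → ℝ, ∀ k, c k ∈ Ioo 0 1 → F (a k) = c k := by
  classical
  exact ⟨fun k ↦ if h : c k ∈ Ioo 0 1 then (hF h).choose else 0,
    fun k hk ↦ by simpa [hk] using (hF hk).choose_spec⟩

lemma exists_grid_le_empiricalCDF (hmono : Monotone F) (hF0 : ∀ x, 0 ≤ F x)
    (hF : Ioo 0 1 ⊆ range F) (hε : 0 < ε) :
    ∃ a : Fin (n + 1) → ℝ, ∀ (w : Fin n → ℝ) x, F x + ε < empiricalCDF w x →
      ∃ k, F (a k) + ε ≤ empiricalCDF w (a k) := by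
  obtain ⟨a, ha⟩ := exists_forall_mem_Ioo_imp_eq hF fun k : Fin (n + 1) ↦ k / n - ε
  refine ⟨a, fun w x hx ↦ ?_⟩
  obtain ⟨k, hk⟩ := empiricalCDF.exists_eq_div w x
  have hFa : F (a k) = k / n - ε :=
    ha k ⟨by linarith [hF0 x], by linarith [empiricalCDF.le_one w x]⟩
  have hxa : x ≤ a k := le_of_not_gt fun h ↦ by linarith [hmono h.le]
  exact ⟨k, by linarith [empiricalCDF.monotone w hxa]⟩

lemma exists_grid_empiricalCDF_le (hmono : Monotone F) (hF1 : ∀ x, F x ≤ 1)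
    (hF : Ioo 0 1 ⊆ range F) (hε : 0 < ε) :
    ∃ b : Fin (n + 1) → ℝ, ∀ (w : Fin n → ℝ) x, empiricalCDF w x + ε < F x →
      ∃ k, empiricalCDF w (b k) + ε ≤ F (b k) := by
  obtain ⟨b, hb⟩ := exists_forall_mem_Ioo_imp_eq hF fun k : Fin (n + 1) ↦ k / n + ε
  refine ⟨b, fun w x hx ↦ ?_⟩
  obtain ⟨k, hk⟩ := empiricalCDF.exists_eq_div w x
  have hFb : F (b k) = k / n + ε :=
    hb k ⟨by linarith [empiricalCDF.nonneg w x], by linarith [hF1 x]⟩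
  have hbx : b k ≤ x := le_of_not_gt fun h ↦ by linarith [hmono h.le]
  exact ⟨k, by linarith [empiricalCDF.monotone w hbx]⟩

end Grid

lemma Ioo_subset_range_cdf {ν : Measure ℝ} (hc : Continuous (cdf ν)) :
    Ioo 0 1 ⊆ range (cdf ν) := fun _ h ↦
  mem_range_of_exists_le_of_exists_ge hc
    (((tendsto_cdf_atBot ν).eventually_le_const h.1).exists)
    (((tendsto_cdf_atTop ν).eventually_const_le h.2).exists)

lemma measurable_ite_le {Ω : Type*} [MeasurableSpace Ω] {f : Ω → ℝ} (hf : Measurable f) (a : ℝ) :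
    Measurable fun ω ↦ if f ω ≤ a then (1 : ℝ) else 0 :=
  Measurable.ite (measurableSet_le hf measurable_const) measurable_const measurable_const

section DKW

variable {Ω : Type*} [MeasurableSpace Ω] {μ : Measure Ω} [IsProbabilityMeasure μ]

lemma cdf_map_apply {f : Ω → ℝ} (hf : Measurable f) (x : ℝ) :
    cdf (μ.map f) x = μ.real {ω | f ω ≤ x} := by
  have := Measure.isProbabilityMeasure_map (μ := μ) hf.aemeasurable
  rw [cdf_eq_real, map_measureReal_apply hf measurableSet_Iic]
  rfl

lemma integral_ite_le_eq_cdf {f : Ω → ℝ} (hf : Measurable f) {ν : Measure ℝ}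
    (hlaw : μ.map f = ν) (a : ℝ) : ∫ ω, (if f ω ≤ a then (1 : ℝ) else 0) ∂μ = cdf ν a := by
  rw [← hlaw, cdf_map_apply hf, ← integral_indicator_one (measurableSet_le hf measurable_const)]
  congr 1 with ω

variable {n : ℕ} {X : Fin n → Ω → ℝ} (hm : ∀ i, Measurable (X i)) (hind : iIndepFun X μ)
  {ν : Measure ℝ} (hlaw : ∀ i, μ.map (X i) = ν) {ε : ℝ}
include hm hind hlaw

lemma measureReal_cdf_add_le_empiricalCDF_le (hε : 0 ≤ ε) (a : ℝ) :
    μ.real {ω | cdf ν a + ε ≤ empiricalCDF (fun i ↦ X i ω) a} ≤ exp (-2 * n * ε ^ 2) :=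
  measureReal_add_le_mean_le (Z := fun i ω ↦ if X i ω ≤ a then (1 : ℝ) else 0)
    (fun i ↦ measurable_ite_le (hm i) a) (fun i ω ↦ by split_ifs <;> simp)
    (hind.comp _ fun _ ↦ measurable_ite_le measurable_id a)
    (fun i ↦ integral_ite_le_eq_cdf (hm i) (hlaw i) a) hε

lemma measureReal_empiricalCDF_add_le_cdf_le (hε : 0 ≤ ε) (a : ℝ) :
    μ.real {ω | empiricalCDF (fun i ↦ X i ω) a + ε ≤ cdf ν a} ≤ exp (-2 * n * ε ^ 2) :=
  measureReal_mean_add_le_le (Z := fun i ω ↦ if X i ω ≤ a then (1 : ℝ) else 0)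
    (fun i ↦ measurable_ite_le (hm i) a) (fun i ω ↦ by split_ifs <;> simp)
    (hind.comp _ fun _ ↦ measurable_ite_le measurable_id a)
    (fun i ↦ integral_ite_le_eq_cdf (hm i) (hlaw i) a) hε

theorem measureReal_exists_lt_abs_empiricalCDF_sub_cdf_le (hc : Continuous (cdf ν))
    (hε : 0 < ε) :
    μ.real {ω | ∃ x, ε < |empiricalCDF (fun i ↦ X i ω) x - cdf ν x|}
      ≤ 2 * (n + 1) * exp (-2 * n * ε ^ 2) := by
  obtain ⟨a, ha⟩ := exists_grid_le_empiricalCDF (n := n) (cdf ν).mono (cdf_nonneg ν)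
    (Ioo_subset_range_cdf hc) hε
  obtain ⟨b, hb⟩ := exists_grid_empiricalCDF_le (n := n) (cdf ν).mono (cdf_le_one ν)
    (Ioo_subset_range_cdf hc) hε
  have hsub : {ω | ∃ x, ε < |empiricalCDF (fun i ↦ X i ω) x - cdf ν x|} ⊆
      ⋃ k, ({ω | cdf ν (a k) + ε ≤ empiricalCDF (fun i ↦ X i ω) (a k)} ∪
        {ω | empiricalCDF (fun i ↦ X i ω) (b k) + ε ≤ cdf ν (b k)}) := by
    rintro ω ⟨x, hx⟩
    rcases lt_abs.1 hx with h | h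
    · obtain ⟨k, hk⟩ := ha _ x (by linarith)
      exact mem_iUnion.2 ⟨k, Or.inl hk⟩
    · obtain ⟨k, hk⟩ := hb _ x (by linarith)
      exact mem_iUnion.2 ⟨k, Or.inr hk⟩
  calc _ ≤ _ := measureReal_mono hsub
    _ ≤ _ := measureReal_iUnion_fintype_le _
    _ ≤ ∑ _k : Fin (n + 1), 2 * exp (-2 * n * ε ^ 2) := Finset.sum_le_sum fun k _ ↦
      (measureReal_union_le _ _).trans <| by
        linarith [measureReal_cdf_add_le_empiricalCDF_le hm hind hlaw hε.le (a k),
          measureReal_empiricalCDF_add_le_cdf_le hm hind hlaw hε.le (b k)]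
    _ = _ := by simp; ring

end DKW

section Decomposition

variable {n : ℕ}

lemma abs_mean_le_of_forall_abs_le {t : Fin n → ℝ} {r : ℝ} (hr : 0 ≤ r) (ht : ∀ i, |t i| ≤ r) :
    |(1 / n) * ∑ i, t i| ≤ r := by
  rcases n.eq_zero_or_pos with rfl | hn
  · simpa using hr
  calc |(1 / n) * ∑ i, t i| ≤ (1 / n) * ∑ _i : Fin n, r := by
        rw [abs_mul, abs_of_pos (by positivity)]
        gcongr
        exact (Finset.abs_sum_le_sum_abs _ _).trans (Finset.sum_le_sum fun i _ ↦ ht i)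
    _ = r := by simp [field]

lemma abs_mul_sub_mul_le {a b c d : ℝ} (hb : |b| ≤ 1) (hc : |c| ≤ 1) :
    |a * b - c * d| ≤ |a - c| + |b - d| := by
  calc |a * b - c * d| = |(a - c) * b + c * (b - d)| := by ring_nf
    _ ≤ |a - c| * |b| + |c| * |b - d| := by
      rw [← abs_mul, ← abs_mul]
      exact abs_add_le _ _
    _ ≤ |a - c| + |b - d| := by
      gcongr
      · exact mul_le_of_le_one_right (abs_nonneg _) hb
      · exact mul_le_of_le_one_left (abs_nonneg _) hc

lemma exists_lt_abs_sub_of_three_mul_lt_abs_mean_mul_sub {a b c d : Fin n → ℝ} {m ε : ℝ}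
    (hb : ∀ j, |b j| ≤ 1) (hc : ∀ j, |c j| ≤ 1)
    (h : 3 * ε < |(1 / n) * ∑ j, a j * b j - m|) :
    (∃ j, ε < |a j - c j|) ∨ (∃ j, ε < |b j - d j|) ∨ ε < |(1 / n) * ∑ j, c j * d j - m| := by
  by_contra! hle
  obtain ⟨ha, hd, hm⟩ := hle
  have hε : 0 ≤ ε := (abs_nonneg _).trans hm
  have hmean : |(1 / n) * ∑ j, (a j * b j - c j * d j)| ≤ 2 * ε :=
    abs_mean_le_of_forall_abs_le (by positivity) fun j ↦
      (abs_mul_sub_mul_le (hb j) (hc j)).trans (by linarith [ha j, hd j])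
  have hsplit : (1 / n) * ∑ j, a j * b j - m =
      (1 / n) * ∑ j, (a j * b j - c j * d j) + ((1 / n) * ∑ j, c j * d j - m) := by
    rw [Finset.sum_sub_distrib]
    ring
  rw [hsplit] at h
  linarith [abs_add_le ((1 / n) * ∑ j, (a j * b j - c j * d j)) ((1 / n) * ∑ j, c j * d j - m)]

end Decomposition

/-- Deviation bound for the Spearman screening statistic: for i.i.d. pairs `(X_i, Y_i)`
with continuous marginal CDFs, `ω̂ = (1/n)Σ_j F̂_X(X_j)F̂_Y(Y_j) - 1/4` and
`ω = E[F_X(X)F_Y(Y)] - 1/4` satisfy `P(|ω̂ - ω| > 3ε) ≤ 6(n+1)exp(-2nε²)`. -/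
theorem spearman_deviation_bound
    {Ω : Type*} [MeasurableSpace Ω] (μ : Measure Ω) [IsProbabilityMeasure μ]
    (n : ℕ) (hn : 0 < n)
    (V : Fin n → Ω → ℝ × ℝ) (hV : ∀ i, Measurable (V i))
    (hindep : iIndepFun V μ)
    (hident : ∀ i, μ.map (V i) = μ.map (V ⟨0, hn⟩))
    (FX FY : ℝ → ℝ)
    (hFX : ∀ x, FX x = (μ {ω | (V ⟨0, hn⟩ ω).1 ≤ x}).toReal)
    (hFY : ∀ y, FY y = (μ {ω | (V ⟨0, hn⟩ ω).2 ≤ y}).toReal)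
    (hFXc : Continuous FX) (hFYc : Continuous FY)
    (ε : ℝ) (hε : 0 < ε) :
    (μ {ω |
        3 * ε <
          |((1 / (n : ℝ)) * ∑ j,
              ((1 / (n : ℝ)) * ∑ i, if (V i ω).1 ≤ (V j ω).1 then (1 : ℝ) else 0)
                * ((1 / (n : ℝ)) * ∑ i, if (V i ω).2 ≤ (V j ω).2 then (1 : ℝ) else 0)
              - 1 / 4)
            - ((∫ ω', FX (V ⟨0, hn⟩ ω').1 * FY (V ⟨0, hn⟩ ω').2 ∂μ) - 1 / 4)|}).toReal
      ≤ 6 * ((n : ℝ) + 1) * Real.exp (-2 * (n : ℝ) * ε ^ 2) := by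
  set i₀ : Fin n := ⟨0, hn⟩
  have hid i : IdentDistrib (V i) (V i₀) μ μ :=
    ⟨(hV i).aemeasurable, (hV i₀).aemeasurable, hident i⟩
  have hFXcdf : FX = cdf (μ.map (Prod.fst ∘ V i₀)) :=
    funext fun x ↦ (hFX x).trans (cdf_map_apply (measurable_fst.comp (hV i₀)) x).symm
  have hFYcdf : FY = cdf (μ.map (Prod.snd ∘ V i₀)) :=
    funext fun y ↦ (hFY y).trans (cdf_map_apply (measurable_snd.comp (hV i₀)) y).symm
  have hX := measureReal_exists_lt_abs_empiricalCDF_sub_cdf_le (X := fun i ω ↦ (V i ω).1)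
    (fun i ↦ measurable_fst.comp (hV i)) (hindep.comp (fun _ ↦ Prod.fst) fun _ ↦ measurable_fst)
    (fun i ↦ ((hid i).comp measurable_fst).map_eq) (hFXcdf ▸ hFXc) hε
  have hY := measureReal_exists_lt_abs_empiricalCDF_sub_cdf_le (X := fun i ω ↦ (V i ω).2)
    (fun i ↦ measurable_snd.comp (hV i)) (hindep.comp (fun _ ↦ Prod.snd) fun _ ↦ measurable_snd)
    (fun i ↦ ((hid i).comp measurable_snd).map_eq) (hFYcdf ▸ hFYc) hε
  rw [← hFXcdf] at hX
  rw [← hFYcdf] at hY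
  have hFX01 x : FX x ∈ Icc 0 1 := hFXcdf ▸ ⟨cdf_nonneg _ x, cdf_le_one _ x⟩
  have hFY01 y : FY y ∈ Icc 0 1 := hFYcdf ▸ ⟨cdf_nonneg _ y, cdf_le_one _ y⟩
  have hφ : Measurable fun p : ℝ × ℝ ↦ FX p.1 * FY p.2 := by fun_prop
  have hC := measureReal_lt_abs_mean_sub_le (Z := fun j ω ↦ FX (V j ω).1 * FY (V j ω).2)
    (fun j ↦ hφ.comp (hV j)) (fun j ω ↦ unitInterval.mul_mem (hFX01 _) (hFY01 _))
    (hindep.comp (fun _ ↦ _) fun _ ↦ hφ) (fun j ↦ ((hid j).comp hφ).integral_eq) hε.le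
  -- the three sets of the union are fixed by unification with `hX`, `hY` and `hC`
  refine (measureReal_mono (s₂ := _ ∪ _ ∪ _) (fun ω (hω : 3 * ε < |_|) ↦ ?_)
    (measure_ne_top _ _)).trans ((measureReal_union_le _ _).trans
      ((add_le_add (measureReal_union_le _ _) le_rfl).trans
        ((add_le_add (add_le_add hX hY) hC).trans ?_)))
  · obtain ⟨j, hj⟩ | ⟨j, hj⟩ | hj := exists_lt_abs_sub_of_three_mul_lt_abs_mean_mul_sub
      (a := fun j ↦ empiricalCDF (fun i ↦ (V i ω).1) (V j ω).1)
      (b := fun j ↦ empiricalCDF (fun i ↦ (V i ω).2) (V j ω).2)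
      (c := fun j ↦ FX (V j ω).1) (d := fun j ↦ FY (V j ω).2)
      (fun j ↦ empiricalCDF.abs_le_one _ _)
      (fun j ↦ (abs_of_nonneg (hFX01 _).1).trans_le (hFX01 _).2)
      (by rwa [sub_sub_sub_cancel_right] at hω)
    · exact Or.inl (Or.inl ⟨_, hj⟩)
    · exact Or.inl (Or.inr ⟨_, hj⟩)
    · exact Or.inr hj
  · nlinarith [exp_pos (-2 * n * ε ^ 2), n.cast_nonneg (α := ℝ)]
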